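/- For λ > 1 and D ≥ 2, define the geometric priors P(s_m) = λ^m / Σ_{q=0}^{D−1} λ^q and Q(s_m) = λ^{−m} / Σ_{q=0}^{D−1} λ^{−q} on states s_0, …, s_{D−1}. Then the L1 distance satisfies ||P − Q||_1 ≥ 2(λ−1)(λ^{D−1}−1)/(λ^D − 1) ≥ 2(λ−1)/(λ+1). -/

import Mathlib

/-!
Since `P - Q` sums to zero, the other coordinates together carry at least `|P(s_0) - Q(s_0)|`,
so `‖P - Q‖₁ ≥ 2 |P(s_0) - Q(s_0)|`. Reflecting the index shows
`Σ_q λ^{-q} = λ^{-(D-1)} Σ_q λ^q`, hence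
`Q(s_0) - P(s_0) = (λ^{D-1} - 1) / Σ_q λ^q = (λ - 1)(λ^{D-1} - 1)/(λ^D - 1)`.
The final comparison with `(λ - 1)/(λ + 1)` reduces to `λ ≤ λ^{D-1}`.
-/

open Finset

theorem Finset.two_nsmul_abs_le_sum_abs_of_sum_eq_zero {ι G : Type*} [DecidableEq ι]
    [AddCommGroup G] [LinearOrder G] [IsOrderedAddMonoid G] {s : Finset ι} {f : ι → G} {i : ι}
    (hi : i ∈ s) (hf : ∑ j ∈ s, f j = 0) : 2 • |f i| ≤ ∑ j ∈ s, |f j| := by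
  have hrest : ∑ j ∈ s.erase i, f j = -f i := by
    rw [← add_sum_erase s f hi] at hf
    exact eq_neg_of_add_eq_zero_right hf
  calc 2 • |f i| = |f i| + |∑ j ∈ s.erase i, f j| := by rw [hrest, abs_neg, two_nsmul]
    _ ≤ |f i| + ∑ j ∈ s.erase i, |f j| := by gcongr; exact abs_sum_le_sum_abs _ _
    _ = ∑ j ∈ s, |f j| := add_sum_erase s (fun j => |f j|) hi

section GeometricSum

variable {l : ℝ}

theorem geom_sum_inv_eq_div_pow (hl : l ≠ 0) (n : ℕ) :
    ∑ q ∈ range (n + 1), l⁻¹ ^ q = (∑ q ∈ range (n + 1), l ^ q) / l ^ n := by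
  rw [eq_div_iff (pow_ne_zero n hl), sum_mul, ← sum_range_reflect]
  refine sum_congr rfl fun q hq => ?_
  have hqn : q ≤ n := Nat.lt_succ_iff.mp (mem_range.mp hq)
  rw [Nat.add_sub_cancel, inv_pow, ← div_eq_inv_mul, div_eq_iff (pow_ne_zero _ hl), ← pow_add,
    Nat.add_sub_cancel' hqn]

theorem inv_geom_sum_inv_sub_inv_geom_sum (hl : 1 < l) (n : ℕ) :
    (∑ q ∈ range (n + 1), l⁻¹ ^ q)⁻¹ - (∑ q ∈ range (n + 1), l ^ q)⁻¹ =
      (l - 1) * (l ^ n - 1) / (l ^ (n + 1) - 1) := by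
  have hl0 : l ≠ 0 := by positivity
  have hl1 : l - 1 ≠ 0 := sub_ne_zero.mpr hl.ne'
  have hpow : l ^ (n + 1) - 1 ≠ 0 := sub_ne_zero.mpr (one_lt_pow₀ hl n.succ_ne_zero).ne'
  rw [geom_sum_inv_eq_div_pow hl0, geom_sum_eq hl.ne', inv_div, div_div_eq_mul_div]
  field_simp

theorem div_add_one_le_mul_pow_sub_one_div (hl : 1 < l) {n : ℕ} (hn : n ≠ 0) :
    (l - 1) / (l + 1) ≤ (l - 1) * (l ^ n - 1) / (l ^ (n + 1) - 1) := by
  have hpow : 0 < l ^ (n + 1) - 1 := sub_pos.mpr (one_lt_pow₀ hl n.succ_ne_zero)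
  have hle : l ≤ l ^ n := le_self_pow₀ hl.le hn
  rw [div_le_div_iff₀ (by linarith) hpow, pow_succ]
  nlinarith [mul_le_mul_of_nonneg_left hle (sub_nonneg.mpr hl.le)]

end GeometricSum

/-- For `λ > 1` and `D ≥ 2`, the geometric priors `P(s_m) = λ^m / Σ_q λ^q` and
`Q(s_m) = λ^{-m} / Σ_q λ^{-q}` on `D` states have L1 distance at least
`2(λ-1)(λ^{D-1}-1)/(λ^D-1)`, which is at least `2(λ-1)/(λ+1)`. -/
theorem geometric_priors_l1_lower_bound (l : ℝ) (hl : 1 < l) (D : ℕ) (hD : 2 ≤ D) :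
    (∑ m ∈ Finset.range D,
        |l ^ m / (∑ q ∈ Finset.range D, l ^ q) -
          l⁻¹ ^ m / (∑ q ∈ Finset.range D, l⁻¹ ^ q)| ≥
      2 * (l - 1) * (l ^ (D - 1) - 1) / (l ^ D - 1)) ∧
    2 * (l - 1) * (l ^ (D - 1) - 1) / (l ^ D - 1) ≥ 2 * (l - 1) / (l + 1) := by
  obtain ⟨n, rfl⟩ : ∃ n, D = n + 1 := ⟨D - 1, by omega⟩
  rw [Nat.add_sub_cancel]
  have hS : 0 < ∑ q ∈ range (n + 1), l ^ q := geom_sum_pos (by positivity) n.succ_ne_zero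
  have hT : 0 < ∑ q ∈ range (n + 1), l⁻¹ ^ q := geom_sum_pos (by positivity) n.succ_ne_zero
  have hsum : ∑ m ∈ range (n + 1),
      (l ^ m / (∑ q ∈ range (n + 1), l ^ q) - l⁻¹ ^ m / (∑ q ∈ range (n + 1), l⁻¹ ^ q)) = 0 := by
    rw [sum_sub_distrib, ← sum_div, ← sum_div, div_self hS.ne', div_self hT.ne', sub_self]
  have hfirst := two_nsmul_abs_le_sum_abs_of_sum_eq_zero (by simp : 0 ∈ range (n + 1)) hsum
  have hpow : ∀ k, 0 ≤ l ^ k - 1 := fun k => sub_nonneg.mpr (one_le_pow₀ hl.le)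
  rw [pow_zero, pow_zero, one_div, one_div, abs_sub_comm, inv_geom_sum_inv_sub_inv_geom_sum hl,
    abs_of_nonneg (div_nonneg (mul_nonneg (by linarith) (hpow n)) (hpow (n + 1))), two_nsmul,
    ← two_mul] at hfirst
  rw [mul_assoc, mul_div_assoc (2 : ℝ), mul_div_assoc (2 : ℝ)]
  have hn : n ≠ 0 := by omega
  exact ⟨hfirst, by linarith [div_add_one_le_mul_pow_sub_one_div hl hn]⟩
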